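/- arXiv:math/0011204 — 3 statements merged into one kernel-verified Lean document; each statement's English description precedes it below -/
import Mathlib

section
/- Let G be a finite graph, S a vertex subset, C an odd S-component, v ∈ C, and T a subset of vertices of H := C - v with df_H(T) ≥ 2. Then for S' := S ∪ T ∪ {v}, one has df_G(S') = df_G(S) + df_H(T) - 2. -/
open SimpleGraph Set

variable {V : Type*} [Fintype V] [DecidableEq V]

/-- The vertex set (in `V`) of a connected component of the graph induced on `B`. -/
def compSupp (G : SimpleGraph V) (B : Set V)
    (c : (G.induce B).ConnectedComponent) : Set V :=
  Subtype.val '' c.supp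

/-- `A` is (the vertex set of) a connected component of `G` restricted to `B`. -/
def IsCompOf (G : SimpleGraph V) (B : Set V) (A : Set V) : Prop :=
  ∃ c : (G.induce B).ConnectedComponent, A = compSupp G B c

/-- The number of odd connected components of `G` restricted to `B`. -/
noncomputable def oddComps (G : SimpleGraph V) (B : Set V) : ℕ :=
  Set.ncard {c : (G.induce B).ConnectedComponent | Odd (compSupp G B c).ncard}

/-- The deficiency `df(S) = od(S) - |S|`. -/
noncomputable def df (G : SimpleGraph V) (S : Set V) : ℤ :=
  (oddComps G Sᶜ : ℤ) - S.ncard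

/-- The induced subgraph on `A` has a perfect matching. -/
def HasPM (G : SimpleGraph V) (A : Set V) : Prop :=
  ∃ M : Subgraph (G.induce A), M.IsPerfectMatching

/-- `Df(S)`: total number of vertices in components of `G - S` with no perfect matching. -/
noncomputable def Df (G : SimpleGraph V) (S : Set V) : ℕ :=
  Set.ncard (⋃ c ∈ {c : (G.induce Sᶜ).ConnectedComponent |
    ¬ HasPM G (compSupp G Sᶜ c)}, compSupp G Sᶜ c)

/-- The set of `M`-exposed vertices. -/
def exposed (G : SimpleGraph V) (M : Subgraph G) : Set V :=
  {v | v ∉ M.support}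

/-- `A` induces a factor-critical graph. -/
def FactorCritical (G : SimpleGraph V) (A : Set V) : Prop :=
  ∀ v ∈ A, HasPM G (A \ {v})

/-- The neighborhood of `T ⊆ S` in the bipartite minor `⟨G,S⟩`: the odd
`S`-components adjacent to some vertex of `T`. -/
def minorNbhd (G : SimpleGraph V) (S T : Set V) :
    Set (G.induce Sᶜ).ConnectedComponent :=
  {c | Odd (compSupp G Sᶜ c).ncard ∧ ∃ u ∈ T, ∃ w ∈ compSupp G Sᶜ c, G.Adj u w}

/-- `S` is a Gallai-Edmonds set of `G`. -/
def GallaiEdmonds (G : SimpleGraph V) (S : Set V) : Prop :=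
  (∀ c : (G.induce Sᶜ).ConnectedComponent,
      Even (compSupp G Sᶜ c).ncard → HasPM G (compSupp G Sᶜ c)) ∧
  (∀ c : (G.induce Sᶜ).ConnectedComponent,
      Odd (compSupp G Sᶜ c).ncard → FactorCritical G (compSupp G Sᶜ c)) ∧
  (∀ T ⊆ S, T.Nonempty → T.ncard + 1 ≤ (minorNbhd G S T).ncard)

/-- `w` and `w'` lie in the same `S`-component. -/
def SameComp (G : SimpleGraph V) (S : Set V) (w w' : V) : Prop :=
  ∃ c : (G.induce Sᶜ).ConnectedComponent,
    w ∈ compSupp G Sᶜ c ∧ w' ∈ compSupp G Sᶜ c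

/-- `M` is a maximum matching of `G`. -/
def IsMaximumMatching (G : SimpleGraph V) (M : Subgraph G) : Prop :=
  M.IsMatching ∧ ∀ M' : Subgraph G, M'.IsMatching →
    M'.edgeSet.ncard ≤ M.edgeSet.ncard
section Aux

variable {G : SimpleGraph V} {B B₁ B₂ A A₁ A₂ : Set V}

lemma mem_compSupp {c : (G.induce B).ConnectedComponent} {x : V} :
    x ∈ compSupp G B c ↔ ∃ hx : x ∈ B, (G.induce B).connectedComponentMk ⟨x, hx⟩ = c := by
  constructor
  · rintro ⟨⟨x, hx⟩, hsupp, rfl⟩; exact ⟨hx, hsupp⟩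
  · rintro ⟨hx, h⟩; exact ⟨⟨x, hx⟩, h, rfl⟩

lemma compSupp_injective : Function.Injective (compSupp G B) := fun c d h =>
  ConnectedComponent.supp_injective
    ((Set.image_injective.mpr Subtype.val_injective) h)

lemma walk_reach_down (hclosed : ∀ x ∈ B₁, ∀ y ∈ B, G.Adj x y → y ∈ B₁)
    {x y : ↥B} (p : (G.induce B).Walk x y) (hx : ↑x ∈ B₁) :
    ∃ hy : ↑y ∈ B₁, (G.induce B₁).Reachable ⟨x, hx⟩ ⟨y, hy⟩ := by
  induction p with
  | nil => exact ⟨hx, Reachable.refl _⟩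
  | @cons a b c h q ih =>
    have hadj : G.Adj ↑a ↑b := h
    have hb : ↑b ∈ B₁ := hclosed _ hx _ b.prop hadj
    obtain ⟨hy, hr⟩ := ih hb
    exact ⟨hy, Reachable.trans
      (SimpleGraph.Adj.reachable (show (G.induce B₁).Adj ⟨↑a, hx⟩ ⟨↑b, hb⟩ from hadj)) hr⟩

lemma compSupp_mk_of_closed (hsub : B₁ ⊆ B)
    (hclosed : ∀ x ∈ B₁, ∀ y ∈ B, G.Adj x y → y ∈ B₁) {a : V} (ha : a ∈ B₁) :
    compSupp G B ((G.induce B).connectedComponentMk ⟨a, hsub ha⟩)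
      = compSupp G B₁ ((G.induce B₁).connectedComponentMk ⟨a, ha⟩) := by
  ext x
  simp only [mem_compSupp]
  constructor
  · rintro ⟨hxB, hmk⟩
    obtain ⟨p⟩ := (ConnectedComponent.eq.mp hmk).symm
    obtain ⟨hxB₁, hr⟩ := walk_reach_down hclosed p ha
    exact ⟨hxB₁, ConnectedComponent.eq.mpr hr.symm⟩
  · rintro ⟨hxB₁, hmk⟩
    refine ⟨hsub hxB₁, ConnectedComponent.eq.mpr ?_⟩
    have := (ConnectedComponent.eq.mp hmk).map (G.induceHomOfLE hsub).toHom
    exact this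

lemma IsCompOf.nonempty (h : IsCompOf G B A) : A.Nonempty := by
  obtain ⟨c, rfl⟩ := h
  obtain ⟨a, ha⟩ := c.exists_rep
  exact ⟨a.val, ⟨a, ha, rfl⟩⟩

lemma IsCompOf.subset (h : IsCompOf G B A) : A ⊆ B := by
  obtain ⟨c, rfl⟩ := h
  rintro x ⟨⟨x, hx⟩, _, rfl⟩; exact hx

lemma IsCompOf.closed (h : IsCompOf G B A) :
    ∀ x ∈ A, ∀ y ∈ B, G.Adj x y → y ∈ A := by
  obtain ⟨c, rfl⟩ := h
  intro x hx y hy hadj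
  rw [mem_compSupp] at hx ⊢
  obtain ⟨hxB, rfl⟩ := hx
  exact ⟨hy, ConnectedComponent.eq.mpr
    (SimpleGraph.Adj.reachable
      (show (G.induce B).Adj ⟨y, hy⟩ ⟨x, hxB⟩ from hadj.symm))⟩

lemma IsCompOf.eq_of_mem (h1 : IsCompOf G B A₁) (h2 : IsCompOf G B A₂) {x : V}
    (hx1 : x ∈ A₁) (hx2 : x ∈ A₂) : A₁ = A₂ := by
  obtain ⟨c, rfl⟩ := h1; obtain ⟨d, rfl⟩ := h2
  congr 1
  rw [mem_compSupp] at hx1 hx2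
  obtain ⟨hx, h1⟩ := hx1; obtain ⟨hx', h2⟩ := hx2
  rw [← h1, ← h2]

lemma isCompOf_of_closed (hsub : B₁ ⊆ B)
    (hclosed : ∀ x ∈ B₁, ∀ y ∈ B, G.Adj x y → y ∈ B₁)
    (h : IsCompOf G B₁ A) : IsCompOf G B A := by
  obtain ⟨c, rfl⟩ := h
  obtain ⟨a, rfl⟩ := c.exists_rep
  exact ⟨_, (compSupp_mk_of_closed hsub hclosed a.prop).symm⟩

lemma isCompOf_down (hsub : B₁ ⊆ B)
    (hclosed : ∀ x ∈ B₁, ∀ y ∈ B, G.Adj x y → y ∈ B₁)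
    (h : IsCompOf G B A) {a : V} (ha : a ∈ A) (haB₁ : a ∈ B₁) :
    IsCompOf G B₁ A := by
  obtain ⟨c, rfl⟩ := h
  rw [mem_compSupp] at ha
  obtain ⟨hxB, rfl⟩ := ha
  refine ⟨(G.induce B₁).connectedComponentMk ⟨a, haB₁⟩, ?_⟩
  rw [← compSupp_mk_of_closed hsub hclosed haB₁]

lemma isCompOf_union_iff (hcross : ∀ x ∈ B₁, ∀ y ∈ B₂, ¬ G.Adj x y) :
    IsCompOf G (B₁ ∪ B₂) A ↔ IsCompOf G B₁ A ∨ IsCompOf G B₂ A := by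
  have hc1 : ∀ x ∈ B₁, ∀ y ∈ B₁ ∪ B₂, G.Adj x y → y ∈ B₁ := by
    intro x hx y hy hadj
    rcases hy with hy | hy
    · exact hy
    · exact absurd hadj (hcross x hx y hy)
  have hc2 : ∀ x ∈ B₂, ∀ y ∈ B₁ ∪ B₂, G.Adj x y → y ∈ B₂ := by
    intro x hx y hy hadj
    rcases hy with hy | hy
    · exact absurd hadj.symm (hcross y hy x hx)
    · exact hy
  constructor
  · intro h
    obtain ⟨a, ha⟩ := h.nonempty
    rcases h.subset ha with h1 | h1
    · exact Or.inl (isCompOf_down subset_union_left hc1 h ha h1)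
    · exact Or.inr (isCompOf_down subset_union_right hc2 h ha h1)
  · rintro (h | h)
    · exact isCompOf_of_closed subset_union_left hc1 h
    · exact isCompOf_of_closed subset_union_right hc2 h

lemma isCompOf_self_iff (h : IsCompOf G B A) {A' : Set V} :
    IsCompOf G A A' ↔ A' = A := by
  constructor
  · intro h'
    obtain ⟨a, ha⟩ := h'.nonempty
    exact (isCompOf_of_closed h.subset h.closed h').eq_of_mem h ha (h'.subset ha)
  · rintro rfl
    obtain ⟨a, ha⟩ := h.nonempty
    exact isCompOf_down h.subset h.closed h ha ha

lemma oddComps_eq (G : SimpleGraph V) (B : Set V) :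
    oddComps G B = {A : Set V | IsCompOf G B A ∧ Odd A.ncard}.ncard := by
  rw [oddComps, ← Set.ncard_image_of_injective _ (compSupp_injective (G := G) (B := B))]
  congr 1
  ext A
  simp only [Set.mem_image, Set.mem_setOf_eq, IsCompOf]
  constructor
  · rintro ⟨c, hodd, rfl⟩; exact ⟨⟨c, rfl⟩, hodd⟩
  · rintro ⟨⟨c, rfl⟩, hodd⟩; exact ⟨c, hodd, rfl⟩

end Aux

/-- If `C` is an odd `S`-component, `v ∈ C`, `H := C - v` and `T ⊆ H` has
`df_H(T) ≥ 2`, then for `S' = S ∪ T ∪ {v}` one has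
`df(S') = df(S) + df_H(T) - 2`. -/
theorem stmt_6 (G : SimpleGraph V) (S A T : Set V) (v : V)
    (hC : IsCompOf G Sᶜ A) (hodd : Odd A.ncard) (hv : v ∈ A)
    (hT : T ⊆ A \ {v})
    (hdfH : 2 ≤ (oddComps G ((A \ {v}) \ T) : ℤ) - T.ncard) :
    df G (S ∪ T ∪ {v}) =
      df G S + ((oddComps G ((A \ {v}) \ T) : ℤ) - T.ncard) - 2 := by
  have hAS : A ⊆ Sᶜ := hC.subset
  -- cross edges between A-parts and Sᶜ \ A are impossible
  have hcross : ∀ x ∈ A, ∀ y ∈ Sᶜ \ A, ¬ G.Adj x y := by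
    intro x hx y hy hadj
    exact hy.2 (hC.closed x hx y hy.1 hadj)
  -- decompositions
  have hdec1 : Sᶜ = A ∪ (Sᶜ \ A) := (Set.union_diff_cancel hAS).symm
  have hdec2 : (S ∪ T ∪ {v})ᶜ = ((A \ {v}) \ T) ∪ (Sᶜ \ A) := by
    ext x
    have h1 : x ∈ A → x ∉ S := fun h => hAS h
    have h2 : x ∈ T → x ∈ A := fun h => (hT h).1
    have h3 : x ∈ T → x ≠ v := fun h => (hT h).2
    have h4 : v ∈ A := hv
    simp only [Set.mem_compl_iff, Set.mem_union, Set.mem_diff, Set.mem_singleton_iff,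
      not_or, Set.mem_compl_iff]
    constructor
    · rintro ⟨⟨hS, hTx⟩, hvx⟩
      by_cases hA : x ∈ A
      · exact Or.inl ⟨⟨hA, hvx⟩, hTx⟩
      · exact Or.inr ⟨hS, hA⟩
    · rintro (⟨⟨hA, hvx⟩, hTx⟩ | ⟨hS, hA⟩)
      · exact ⟨⟨h1 hA, hTx⟩, hvx⟩
      · exact ⟨⟨hS, fun h => hA (h2 h)⟩, fun h => hA (h ▸ h4)⟩
  -- first count: oddComps G Sᶜ = 1 + oddComps G (Sᶜ \ A)
  have hsplit1 : {A' : Set V | IsCompOf G Sᶜ A' ∧ Odd A'.ncard}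
      = {A} ∪ {A' : Set V | IsCompOf G (Sᶜ \ A) A' ∧ Odd A'.ncard} := by
    ext A'
    simp only [Set.mem_setOf_eq, Set.mem_union, Set.mem_singleton_iff]
    nth_rewrite 1 [hdec1]
    rw [isCompOf_union_iff hcross, isCompOf_self_iff hC]
    constructor
    · rintro ⟨h | h, ho⟩
      · exact Or.inl h
      · exact Or.inr ⟨h, ho⟩
    · rintro (rfl | ⟨h, ho⟩)
      · exact ⟨Or.inl rfl, hodd⟩
      · exact ⟨Or.inr h, ho⟩
  have hdisj1 : Disjoint ({A} : Set (Set V))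
      {A' : Set V | IsCompOf G (Sᶜ \ A) A' ∧ Odd A'.ncard} := by
    rw [Set.disjoint_left]
    rintro A' rfl ⟨h, _⟩
    obtain ⟨a, ha⟩ := h.nonempty
    exact (h.subset ha).2 ha
  have hcount1 : oddComps G Sᶜ = 1 + oddComps G (Sᶜ \ A) := by
    rw [oddComps_eq, oddComps_eq, hsplit1,
      Set.ncard_union_eq hdisj1 (Set.toFinite _) (Set.toFinite _), Set.ncard_singleton]
  -- second count
  have hcross2 : ∀ x ∈ (A \ {v}) \ T, ∀ y ∈ Sᶜ \ A, ¬ G.Adj x y :=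
    fun x hx y hy => hcross x hx.1.1 y hy
  have hsplit2 : {A' : Set V | IsCompOf G ((S ∪ T ∪ {v})ᶜ) A' ∧ Odd A'.ncard}
      = {A' : Set V | IsCompOf G ((A \ {v}) \ T) A' ∧ Odd A'.ncard}
        ∪ {A' : Set V | IsCompOf G (Sᶜ \ A) A' ∧ Odd A'.ncard} := by
    ext A'
    simp only [Set.mem_setOf_eq, Set.mem_union]
    rw [hdec2, isCompOf_union_iff hcross2]
    tauto
  have hdisj2 : Disjoint {A' : Set V | IsCompOf G ((A \ {v}) \ T) A' ∧ Odd A'.ncard}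
      {A' : Set V | IsCompOf G (Sᶜ \ A) A' ∧ Odd A'.ncard} := by
    rw [Set.disjoint_left]
    rintro A' ⟨h, _⟩ ⟨h', _⟩
    obtain ⟨a, ha⟩ := h.nonempty
    exact (h'.subset ha).2 (h.subset ha).1.1
  have hcount2 : oddComps G ((S ∪ T ∪ {v})ᶜ)
      = oddComps G ((A \ {v}) \ T) + oddComps G (Sᶜ \ A) := by
    rw [oddComps_eq, oddComps_eq (B := (A \ {v}) \ T), oddComps_eq (B := Sᶜ \ A), hsplit2,
      Set.ncard_union_eq hdisj2 (Set.toFinite _) (Set.toFinite _)]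
  -- cardinality of S ∪ T ∪ {v}
  have hvS : v ∉ S := hAS hv
  have hvT : v ∉ T := fun h => (hT h).2 rfl
  have hST : Disjoint S T := Set.disjoint_left.mpr fun x hx hxT => (hAS (hT hxT).1) hx
  have hcard : (S ∪ T ∪ {v}).ncard = S.ncard + T.ncard + 1 := by
    rw [Set.ncard_union_eq (by
        simp only [Set.disjoint_singleton_right, Set.mem_union]
        exact fun h => h.elim hvS hvT) (Set.toFinite _) (Set.toFinite _),
      Set.ncard_union_eq hST (Set.toFinite _) (Set.toFinite _), Set.ncard_singleton]
  -- conclude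
  rw [df, df, hcount1, hcount2, hcard]
  push_cast
  ring
end

section
/- If S is a Gallai-Edmonds set of a finite graph G and v is any vertex of an odd S-component, then there exists a maximum matching of G leaving v exposed. -/
open SimpleGraph Set

variable {V : Type*} [Fintype V] [DecidableEq V]

/-
Hall's condition with surplus one matches every `s ∈ S` into its own odd `S`-component `f s`,
avoiding the component `c₀` of `v`. Give every component a center: `v` for `c₀`, a neighbour of
`s` for `f s`, any vertex otherwise. Factor-criticality matches each odd component minus its
center, the even components have perfect matchings, and the edges from `S` to the centers of
`f(S)` complete a matching whose exposed vertices are exactly the centers of the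
`od(S) - |S|` odd components outside `f(S)`, among them `v`. No matching does better: every
odd component contains an exposed vertex or a vertex matched into `S`, so every matching
exposes at least `od(S) - |S|` vertices.
-/

section

omit [Fintype V] [DecidableEq V]

variable {G : SimpleGraph V} {B S : Set V} {M : G.Subgraph}
  {c c' : (G.induce B).ConnectedComponent} {x y : V}

theorem mem_compSupp_iff :
    x ∈ compSupp G B c ↔ ∃ hx : x ∈ B, (G.induce B).connectedComponentMk ⟨x, hx⟩ = c := by
  simp [compSupp]

theorem compSupp_subset (c : (G.induce B).ConnectedComponent) : compSupp G B c ⊆ B := by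
  rintro _ ⟨⟨x, hx⟩, -, rfl⟩
  exact hx

theorem compSupp_nonempty (c : (G.induce B).ConnectedComponent) : (compSupp G B c).Nonempty :=
  c.nonempty_supp.image _

theorem exists_mem_compSupp (hy : y ∈ B) :
    ∃ c : (G.induce B).ConnectedComponent, y ∈ compSupp G B c :=
  ⟨_, mem_compSupp_iff.2 ⟨hy, rfl⟩⟩

theorem eq_of_mem_compSupp (hx : x ∈ compSupp G B c) (hx' : x ∈ compSupp G B c') : c = c' := by
  obtain ⟨_, rfl⟩ := mem_compSupp_iff.1 hx
  obtain ⟨_, rfl⟩ := mem_compSupp_iff.1 hx'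
  rfl

theorem mem_compSupp_of_adj (hx : x ∈ compSupp G B c) (hy : y ∈ B) (hxy : G.Adj x y) :
    y ∈ compSupp G B c := by
  obtain ⟨hxB, rfl⟩ := mem_compSupp_iff.1 hx
  exact mem_compSupp_iff.2 ⟨hy, ConnectedComponent.connectedComponentMk_eq_of_adj
    (G := G.induce B) (v := ⟨y, hy⟩) (w := ⟨x, hxB⟩) hxy.symm⟩

theorem HasPM.exists_isMatching {A : Set V} (h : HasPM G A) :
    ∃ M : G.Subgraph, M.IsMatching ∧ M.verts = A := by
  obtain ⟨M, hM, hspan⟩ := h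
  refine ⟨M.map (Embedding.induce A).toHom, hM.map _ Subtype.val_injective, ?_⟩
  simp only [Subgraph.map_verts, hspan.verts_eq_univ, Set.image_univ]
  exact Subtype.range_coe

theorem SimpleGraph.Subgraph.IsMatching.ncard_verts [Finite V] (h : M.IsMatching) :
    M.verts.ncard = 2 * M.edgeSet.ncard := by
  classical
  have := Fintype.ofFinite V
  rw [← Nat.card_coe_set_eq, ← Nat.card_coe_set_eq, Nat.card_eq_fintype_card,
    Nat.card_eq_fintype_card, ← Finset.card_univ,
    Finset.card_eq_sum_card_fiberwise (f := h.toEdge) (t := Finset.univ)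
      (fun _ _ => Finset.mem_univ _), Finset.sum_const_nat (m := 2), Finset.card_univ, mul_comm]
  rintro ⟨e, he⟩ -
  induction e using Sym2.ind with
  | _ x y =>
    have hxy : M.Adj x y := he
    rw [Finset.card_eq_two]
    refine ⟨⟨x, hxy.fst_mem⟩, ⟨y, hxy.snd_mem⟩, by simpa using hxy.ne, ?_⟩
    rw [← Finset.coe_inj, Finset.coe_filter_univ, Finset.coe_pair]
    exact h.toEdge_preimage_singleton hxy

theorem exists_exposed_or_matched_into_of_odd [Finite V] (hM : M.IsMatching)
    {c : (G.induce Sᶜ).ConnectedComponent} (hodd : Odd (compSupp G Sᶜ c).ncard) :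
    ∃ z, (z ∈ compSupp G Sᶜ c ∧ z ∉ M.verts) ∨ (z ∈ S ∧ ∃ x ∈ compSupp G Sᶜ c, M.Adj x z) := by
  by_contra! hcon
  -- otherwise `M` restricts to a perfect matching of the odd component
  have hinduce : (M.induce (compSupp G Sᶜ c)).IsMatching := by
    intro x hx
    obtain ⟨y, hxy, hy⟩ := hM (by simpa using (hcon x).1 hx)
    have hyc : y ∈ compSupp G Sᶜ c :=
      mem_compSupp_of_adj hx (fun hyS => (hcon y).2 hyS x hx hxy) (M.adj_sub hxy)
    exact ⟨y, ⟨hx, hyc, hxy⟩, fun z hz => hy z hz.2.2⟩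
  exact Nat.not_even_iff_odd.2 hodd (by simpa using hinduce.ncard_verts ▸ even_two_mul _)

theorem oddComps_le_ncard_compl_verts_add [Finite V] (hM : M.IsMatching) (S : Set V) :
    oddComps G Sᶜ ≤ M.vertsᶜ.ncard + S.ncard := by
  set odd := {c : (G.induce Sᶜ).ConnectedComponent | Odd (compSupp G Sᶜ c).ncard}
  choose z hz using fun c : odd => exists_exposed_or_matched_into_of_odd hM c.2
  have hinj : Function.Injective z := by
    intro c c' hzz
    apply Subtype.ext
    rcases hz c with ⟨hzc, -⟩ | ⟨hzS, x, hx, hxz⟩ <;>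
      rcases hz c' with ⟨hzc', -⟩ | ⟨hzS', x', hx', hxz'⟩
    · exact eq_of_mem_compSupp hzc (hzz ▸ hzc')
    · exact absurd (hzz ▸ hzS') (compSupp_subset _ hzc)
    · exact absurd (hzz ▸ hzS) (compSupp_subset _ hzc')
    · rw [← hzz] at hxz'
      exact eq_of_mem_compSupp hx (hM.eq_of_adj_right hxz' hxz ▸ hx')
  have hrange : range z ⊆ M.vertsᶜ ∪ S := by
    rintro _ ⟨c, rfl⟩
    rcases hz c with ⟨-, hzM⟩ | ⟨hzS, -⟩
    exacts [Or.inl hzM, Or.inr hzS]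
  calc oddComps G Sᶜ = (range z).ncard := by
        rw [Set.ncard_range_of_injective hinj, Nat.card_coe_set_eq]; rfl
    _ ≤ (M.vertsᶜ ∪ S).ncard := Set.ncard_le_ncard hrange
    _ ≤ M.vertsᶜ.ncard + S.ncard := Set.ncard_union_le _ _

theorem isMaximumMatching_of_ncard_compl_verts_add_le [Finite V] (hM : M.IsMatching)
    (h : M.vertsᶜ.ncard + S.ncard ≤ oddComps G Sᶜ) : IsMaximumMatching G M := by
  refine ⟨hM, fun M' hM' => ?_⟩
  have := oddComps_le_ncard_compl_verts_add hM' S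
  have := Set.ncard_add_ncard_compl M.verts
  have := Set.ncard_add_ncard_compl M'.verts
  have := hM.ncard_verts
  have := hM'.ncard_verts
  omega

theorem exists_injective_mem_minorNbhd_ne [Finite V]
    (hHall : ∀ T ⊆ S, T.Nonempty → T.ncard + 1 ≤ (minorNbhd G S T).ncard)
    (c₀ : (G.induce Sᶜ).ConnectedComponent) :
    ∃ f : S → (G.induce Sᶜ).ConnectedComponent, Function.Injective f ∧
      ∀ s : S, f s ≠ c₀ ∧ f s ∈ minorNbhd G S {(s : V)} := by
  classical
  have := Fintype.ofFinite (G.induce Sᶜ).ConnectedComponent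
  refine (Fintype.all_card_le_filter_rel_iff_exists_injective
    (fun (s : S) c => c ≠ c₀ ∧ c ∈ minorNbhd G S {(s : V)})).1 fun A => ?_
  rcases A.eq_empty_or_nonempty with rfl | hA
  · simp
  set N := ({c | ∃ s ∈ A, c ≠ c₀ ∧ c ∈ minorNbhd G S {(s : V)}} :
    Finset (G.induce Sᶜ).ConnectedComponent)
  set T := Subtype.val '' (A : Set S)
  have hsub : minorNbhd G S T ⊆ insert c₀ (N : Set _) := by
    rintro c ⟨hodd, _, ⟨s, hs, rfl⟩, w, hw, hsw⟩
    by_cases hc : c = c₀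
    · exact Or.inl hc
    · exact Or.inr (by simpa [N] using ⟨s, ⟨s.2, hs⟩, hc, hodd, s, rfl, w, hw, hsw⟩)
  have hT : T.ncard = A.card := by
    rw [Set.ncard_image_of_injective _ Subtype.val_injective, Set.ncard_coe_finset]
  have := hHall T (by simp [T]) (hA.to_set.image _)
  have := (Set.ncard_le_ncard hsub).trans (Set.ncard_insert_le _ _)
  rw [Set.ncard_coe_finset] at this
  omega

theorem exists_centers {f : S → (G.induce Sᶜ).ConnectedComponent} (hf : Function.Injective f)
    {c₀ : (G.induce Sᶜ).ConnectedComponent}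
    (hfc : ∀ s : S, f s ≠ c₀ ∧ f s ∈ minorNbhd G S {(s : V)})
    {v : V} (hv : v ∈ compSupp G Sᶜ c₀) :
    ∃ x : (G.induce Sᶜ).ConnectedComponent → V, (∀ c, x c ∈ compSupp G Sᶜ c) ∧ x c₀ = v ∧
      ∀ s : S, G.Adj s (x (f s)) := by
  have : ∀ c, ∃ y ∈ compSupp G Sᶜ c, (c = c₀ → y = v) ∧ ∀ s : S, f s = c → G.Adj s y := by
    intro c
    by_cases hc : c ∈ range f
    · obtain ⟨s, rfl⟩ := hc
      obtain ⟨hne, -, _, rfl, w, hw, hsw⟩ := hfc s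
      exact ⟨w, hw, fun h => absurd h hne, fun s' hs' => hf hs' ▸ hsw⟩
    have hnf : ∀ s, f s ≠ c := fun s hs => hc ⟨s, hs⟩
    by_cases hc₀ : c = c₀
    · exact ⟨v, hc₀ ▸ hv, fun _ => rfl, fun s hs => absurd hs (hnf s)⟩
    · obtain ⟨y, hy⟩ := compSupp_nonempty c
      exact ⟨y, hy, fun h => absurd h hc₀, fun s hs => absurd hs (hnf s)⟩
  choose x hx hx₀ hxf using this
  exact ⟨x, hx, hx₀ c₀ rfl, fun s => hxf _ s rfl⟩

theorem GallaiEdmonds.exists_isMatching_verts_eq (h : GallaiEdmonds G S)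
    {c : (G.induce Sᶜ).ConnectedComponent} {y : V} (hy : y ∈ compSupp G Sᶜ c) :
    ∃ N : G.Subgraph, N.IsMatching ∧
      N.verts = {z ∈ compSupp G Sᶜ c | Odd (compSupp G Sᶜ c).ncard → z ≠ y} := by
  by_cases hc : Odd (compSupp G Sᶜ c).ncard
  · convert (h.2.1 c hc y hy).exists_isMatching using 4
    ext
    simp [hc, and_comm]
  · convert (h.1 c (Nat.not_odd_iff_even.1 hc)).exists_isMatching using 4
    simp [hc]

theorem GallaiEdmonds.exists_isMatching_verts_eq_iUnion (h : GallaiEdmonds G S)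
    {x : (G.induce Sᶜ).ConnectedComponent → V} (hx : ∀ c, x c ∈ compSupp G Sᶜ c) :
    ∃ N : G.Subgraph, N.IsMatching ∧
      N.verts = ⋃ c, {z ∈ compSupp G Sᶜ c | Odd (compSupp G Sᶜ c).ncard → z ≠ x c} := by
  choose N hN hNv using fun c => h.exists_isMatching_verts_eq (hx c)
  refine ⟨⨆ c, N c, Subgraph.IsMatching.iSup hN fun c c' hcc' => ?_, by simp [hNv]⟩
  dsimp only
  rw [(hN c).support_eq_verts, (hN c').support_eq_verts, hNv, hNv, Set.disjoint_left]
  exact fun y hy hy' => hcc' (eq_of_mem_compSupp hy.1 hy'.1)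

theorem GallaiEdmonds.exists_isMatching_compl_verts_eq (h : GallaiEdmonds G S)
    {f : S → (G.induce Sᶜ).ConnectedComponent} (hf : Function.Injective f)
    (hfodd : ∀ s, Odd (compSupp G Sᶜ (f s)).ncard)
    {x : (G.induce Sᶜ).ConnectedComponent → V} (hx : ∀ c, x c ∈ compSupp G Sᶜ c)
    (hxf : ∀ s : S, G.Adj s (x (f s))) :
    ∃ M : G.Subgraph, M.IsMatching ∧
      M.vertsᶜ = x '' {c | Odd (compSupp G Sᶜ c).ncard ∧ c ∉ range f} := by
  have hxinj : Function.Injective x := fun c c' hcc' => eq_of_mem_compSupp (hx c) (hcc' ▸ hx c')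
  have hdisj : Disjoint S (range (x ∘ f)) := by
    rw [Set.disjoint_right]
    rintro _ ⟨s, rfl⟩
    exact compSupp_subset _ (hx (f s))
  obtain ⟨E, hEv, hE⟩ := Subgraph.IsMatching.exists_of_disjoint_sets_of_equiv hdisj
    (Equiv.ofInjective _ (hxinj.comp hf)) (fun s => by simpa using hxf s)
  obtain ⟨N, hN, hNv⟩ := h.exists_isMatching_verts_eq_iUnion hx
  refine ⟨E ⊔ N, hE.sup hN ?_, ?_⟩
  · rw [hE.support_eq_verts, hN.support_eq_verts, hEv, hNv,
      Set.disjoint_union_left, Set.disjoint_iUnion_right, Set.disjoint_iUnion_right]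
    refine ⟨fun c => ?_, fun c => ?_⟩
    · rw [Set.disjoint_left]
      exact fun y hyS hy => compSupp_subset _ hy.1 hyS
    · rw [Set.disjoint_left]
      rintro _ ⟨s, rfl⟩ hy
      obtain rfl := eq_of_mem_compSupp (hx (f s)) hy.1
      exact hy.2 (hfodd s) rfl
  · ext y
    simp only [Subgraph.verts_sup, hEv, hNv, Set.mem_compl_iff,
      Set.mem_union, Set.mem_iUnion, Set.mem_ofPred_eq, Set.mem_image, Set.mem_range,
      Function.comp_apply, not_or, not_exists, not_and]
    constructor
    · rintro ⟨⟨hyS, hyx⟩, hycore⟩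
      obtain ⟨c, hyc⟩ := exists_mem_compSupp (G := G) (Set.mem_compl hyS)
      obtain ⟨hc, rfl⟩ : Odd _ ∧ y = x c := by simpa using hycore c hyc
      exact ⟨c, ⟨hc, fun s hs => hyx s (hs ▸ rfl)⟩, rfl⟩
    · rintro ⟨c, ⟨hc, hcf⟩, rfl⟩
      refine ⟨⟨compSupp_subset c (hx c), fun s hs => hcf s (hxinj hs)⟩, fun c' hc' => ?_⟩
      obtain rfl := eq_of_mem_compSupp (hx c) hc'
      exact fun hne => hne hc rfl

theorem GallaiEdmonds.exists_isMatching_not_mem_verts [Finite V] (h : GallaiEdmonds G S)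
    {c₀ : (G.induce Sᶜ).ConnectedComponent} (hodd : Odd (compSupp G Sᶜ c₀).ncard)
    {v : V} (hv : v ∈ compSupp G Sᶜ c₀) :
    ∃ M : G.Subgraph, M.IsMatching ∧ v ∉ M.verts ∧
      M.vertsᶜ.ncard + S.ncard ≤ oddComps G Sᶜ := by
  obtain ⟨f, hf, hfc⟩ := exists_injective_mem_minorNbhd_ne h.2.2 c₀
  obtain ⟨x, hx, rfl, hxf⟩ := exists_centers hf hfc hv
  have hfodd : ∀ s, Odd (compSupp G Sᶜ (f s)).ncard := fun s => (hfc s).2.1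
  obtain ⟨M, hM, hMv⟩ := h.exists_isMatching_compl_verts_eq hf hfodd hx hxf
  set odd := {c : (G.induce Sᶜ).ConnectedComponent | Odd (compSupp G Sᶜ c).ncard}
  have hU : {c | Odd (compSupp G Sᶜ c).ncard ∧ c ∉ range f} = odd \ range f := rfl
  refine ⟨M, hM, ?_, ?_⟩
  · rw [← Set.mem_compl_iff, hMv]
    exact ⟨c₀, ⟨hodd, fun ⟨s, hs⟩ => (hfc s).1 hs⟩, rfl⟩
  · have hrange : (range f).ncard = S.ncard := by
      rw [Set.ncard_range_of_injective hf, Nat.card_coe_set_eq]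
    calc M.vertsᶜ.ncard + S.ncard ≤ (odd \ range f).ncard + (range f).ncard := by
          rw [hMv, hU, hrange]
          exact Nat.add_le_add_right (Set.ncard_image_le (Set.toFinite _)) _
      _ = oddComps G Sᶜ := Set.ncard_sdiff_add_ncard_of_subset (by
          rintro _ ⟨s, rfl⟩; exact hfodd s)

end

/-- If `S` is Gallai-Edmonds and `v` lies in an odd `S`-component, then some
maximum matching of `G` leaves `v` exposed. -/
theorem stmt_9 (G : SimpleGraph V) (S A : Set V) (v : V)
    (h : GallaiEdmonds G S) (hC : IsCompOf G Sᶜ A) (hodd : Odd A.ncard)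
    (hv : v ∈ A) :
    ∃ M : Subgraph G, IsMaximumMatching G M ∧ v ∈ exposed G M := by
  obtain ⟨c, rfl⟩ := hC
  obtain ⟨M, hM, hvM, hcard⟩ := h.exists_isMatching_not_mem_verts hodd hv
  exact ⟨M, isMaximumMatching_of_ncard_compl_verts_add_le hM hcard,
    show v ∉ M.support by rwa [hM.support_eq_verts]⟩
end

section
/- (Tutte-Berge Formula) For every finite graph G, the minimum number of vertices left exposed by a matching of G equals the maximum over all vertex subsets S of od(S) - |S|, where od(S) is the number of odd components of G - S. -/
/-!
Adjoin `d := max_S (od(S) - |S|)` new vertices adjacent to everything, including each other.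
Deleting a set `u` that misses a new vertex leaves a connected graph, and since `|V| + d` is
even, parity forbids `u` to violate Tutte's condition. Deleting a set `u` that contains all new
vertices leaves `G - S` with `S = u ∩ V`, which has `od(S) ≤ |S| + d = |u|` odd components.
Tutte's theorem thus gives a perfect matching of the enlarged graph, whose restriction to `G`
exposes at most `d` vertices. Conversely, a matching of `G` exposing `k` vertices becomes a perfect
matching once `k` universal vertices are adjoined, so the easy half of Tutte's theorem gives
`od(S) ≤ |S| + k` for every `S`.
-/

open SimpleGraph Set

variable {V : Type*} [Fintype V] [DecidableEq V]

namespace SimpleGraph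

variable {α β : Type*}

def addUniversalVerts (G : SimpleGraph α) (β : Type*) : SimpleGraph (α ⊕ β) where
  Adj
    | .inl a, .inl b => G.Adj a b
    | .inr i, .inr j => i ≠ j
    | _, _ => True
  symm := ⟨by
    rintro (a | i) (b | j) h
    exacts [h.symm, trivial, trivial, Ne.symm h]⟩
  loopless := ⟨by
    rintro (a | i) h
    exacts [G.loopless.irrefl a h, h rfl]⟩

section addUniversalVerts

variable {G : SimpleGraph α} {a b : α} {i j : β}

@[simp] lemma addUniversalVerts_adj_inl_inl :
    (G.addUniversalVerts β).Adj (.inl a) (.inl b) ↔ G.Adj a b := .rfl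

@[simp] lemma addUniversalVerts_adj_inr_inr :
    (G.addUniversalVerts β).Adj (.inr i) (.inr j) ↔ i ≠ j := .rfl

@[simp] lemma addUniversalVerts_adj_inl_inr : (G.addUniversalVerts β).Adj (.inl a) (.inr j) :=
  trivial

end addUniversalVerts

lemma ncard_oddComponents_congr {G : SimpleGraph α} {G' : SimpleGraph β} (e : G ≃g G') :
    G.oddComponents.ncard = G'.oddComponents.ncard := by
  have hsupp (c : G.ConnectedComponent) :
      (e.connectedComponentEquiv c).supp.ncard = c.supp.ncard := by
    simp only [← Nat.card_coe_set_eq]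
    exact (Nat.card_congr (ConnectedComponent.isoEquivSupp e c)).symm
  have : G'.oddComponents = e.connectedComponentEquiv '' G.oddComponents := by
    ext c
    obtain ⟨c, rfl⟩ := e.connectedComponentEquiv.surjective c
    rw [e.connectedComponentEquiv.injective.mem_set_image]
    exact Iff.of_eq (congrArg Odd (hsupp c))
  rw [this, Set.ncard_image_of_injective _ e.connectedComponentEquiv.injective]

lemma oddComps_eq_ncard_oddComponents (G : SimpleGraph α) (B : Set α) :
    oddComps G B = (G.induce B).oddComponents.ncard := by
  simp only [oddComps, compSupp, Set.ncard_image_of_injective _ Subtype.val_injective]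

lemma even_df_add_card [Finite α] (G : SimpleGraph α) (S : Set α) :
    Even (df G S + Nat.card α) := by
  have hodd := (G.induce Sᶜ).odd_ncard_oddComponents
  rw [← oddComps_eq_ncard_oddComponents, Nat.card_coe_set_eq] at hodd
  have : df G S + Nat.card α = (oddComps G Sᶜ + Sᶜ.ncard : ℕ) := by
    rw [df, ← Set.ncard_add_ncard_compl S]; push_cast; ring
  rw [this, Int.even_coe_nat, Nat.even_add, ← Nat.not_odd_iff_even, ← Nat.not_odd_iff_even,
    hodd]

def induceComplIsoDeleteVerts (G : SimpleGraph α) (β : Type*) (S : Set α) :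
    G.induce Sᶜ ≃g
      ((⊤ : (G.addUniversalVerts β).Subgraph).deleteVerts (.inl '' S ∪ .range .inr)).coe where
  toFun a := ⟨.inl a, by simpa using Set.mem_compl_iff _ _ |>.mp a.2⟩
  invFun
    | ⟨.inl a, h⟩ => ⟨a, by simpa using h⟩
    | ⟨.inr j, h⟩ => (h.2 (.inr ⟨j, rfl⟩)).elim
  left_inv _ := rfl
  right_inv := by
    rintro ⟨a | j, h⟩
    · rfl
    · exact (h.2 (.inr ⟨j, rfl⟩)).elim
  map_rel_iff' := by
    rintro ⟨a, ha : a ∉ S⟩ ⟨b, hb : b ∉ S⟩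
    change ((⊤ : (G.addUniversalVerts β).Subgraph).deleteVerts _).Adj (.inl a) (.inl b) ↔ _
    simp [ha, hb]

variable {G : SimpleGraph α}

lemma Subgraph.IsMatching.exists_isPerfectMatching_addUniversalVerts {M : G.Subgraph}
    (hM : M.IsMatching) :
    ∃ M' : (G.addUniversalVerts (exposed G M)).Subgraph, M'.IsPerfectMatching := by
  let M' : (G.addUniversalVerts (exposed G M)).Subgraph :=
    { verts := .univ
      Adj
        | .inl a, .inl b => M.Adj a b
        | .inl a, .inr w => a = w
        | .inr w, .inl a => w = a
        | .inr _, .inr _ => False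
      adj_sub := by
        rintro (a | w) (b | w') h
        exacts [M.adj_sub h, trivial, trivial, h.elim]
      edge_vert _ := trivial
      symm := ⟨by
        rintro (a | w) (b | w') h
        exacts [h.symm, h.symm, h.symm, h]⟩ }
  refine ⟨M', Subgraph.isPerfectMatching_iff.mpr ?_⟩
  rintro (a | w)
  · by_cases ha : a ∈ M.support
    · obtain ⟨b, hab⟩ := ha
      refine ⟨.inl b, hab, ?_⟩
      rintro (c | w) h
      · exact congrArg Sum.inl (hM.eq_of_adj_left h hab)
      · exact (w.2 (h ▸ ⟨b, hab⟩)).elim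
    · refine ⟨.inr ⟨a, ha⟩, rfl, ?_⟩
      rintro (c | w) h
      · exact (ha ⟨c, h⟩).elim
      · exact congrArg Sum.inr (Subtype.ext h.symm)
  · refine ⟨.inl w, rfl, ?_⟩
    rintro (a | w') h
    · exact congrArg Sum.inl h.symm
    · exact h.elim

lemma Subgraph.IsPerfectMatching.exists_isMatching_ncard_exposed_le [Finite β]
    {M' : (G.addUniversalVerts β).Subgraph} (hM' : M'.IsPerfectMatching) :
    ∃ M : G.Subgraph, M.IsMatching ∧ (exposed G M).ncard ≤ Nat.card β := by
  let M : G.Subgraph :=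
    { verts := {a | ∃ b, M'.Adj (.inl a) (.inl b)}
      Adj a b := M'.Adj (.inl a) (.inl b)
      adj_sub h := M'.adj_sub h
      edge_vert h := ⟨_, h⟩
      symm := ⟨fun _ _ h => h.symm⟩ }
  have hM : M.IsMatching := by
    rintro a ⟨b, hab⟩
    exact ⟨b, hab, fun c hac => Sum.inl_injective (hM'.1.eq_of_adj_left hac hab)⟩
  have hpartner (a : exposed G M) : ∃ j, M'.Adj (.inl a) (.inr j) := by
    obtain ⟨b | j, hab, -⟩ := (Subgraph.isPerfectMatching_iff.mp hM') (.inl a)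
    · exact (a.2 ⟨b, hab⟩).elim
    · exact ⟨j, hab⟩
  choose f hf using hpartner
  refine ⟨M, hM, Nat.card_coe_set_eq (exposed G M) ▸ Nat.card_le_card_of_injective f ?_⟩
  exact fun a b hab => Subtype.ext <| Sum.inl_injective <|
    hM'.1.eq_of_adj_right (hf a) (hab ▸ hf b)

variable [Finite α]

lemma isTutteViolator_addUniversalVerts_iff [Finite β] (S : Set α) :
    (G.addUniversalVerts β).IsTutteViolator (.inl '' S ∪ .range .inr) ↔
      (Nat.card β : ℤ) < df G S := by
  have hcard : (.inl '' S ∪ .range .inr : Set (α ⊕ β)).ncard = S.ncard + Nat.card β := by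
    rw [Set.ncard_union_eq (Set.disjoint_left.mpr (by simp)),
      Set.ncard_image_of_injective _ Sum.inl_injective, ← Set.image_univ,
      Set.ncard_image_of_injective _ Sum.inr_injective, Set.ncard_univ]
  rw [IsTutteViolator, hcard, ← ncard_oddComponents_congr (induceComplIsoDeleteVerts G β S),
    ← oddComps_eq_ncard_oddComponents, df]
  omega

lemma not_isTutteViolator_addUniversalVerts [Finite β]
    (heven : Even (Nat.card α + Nat.card β)) {u : Set (α ⊕ β)} {j : β} (hj : .inr j ∉ u) :
    ¬ (G.addUniversalVerts β).IsTutteViolator u := by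
  let K := (⊤ : (G.addUniversalVerts β).Subgraph).deleteVerts u
  have hconn : K.coe.Preconnected := by
    have hr (x : K.verts) : K.coe.Reachable x ⟨.inr j, trivial, hj⟩ := by
      obtain ⟨a | i, hx⟩ := x
      · exact Adj.reachable <|
          Subgraph.deleteVerts_adj.mpr ⟨trivial, hx.2, trivial, hj, by simp⟩
      · obtain rfl | hij := eq_or_ne i j
        · rfl
        · exact Adj.reachable <|
            Subgraph.deleteVerts_adj.mpr ⟨trivial, hx.2, trivial, hj, by simpa⟩
    exact fun x y => (hr x).trans (hr y).symm
  have hle : K.coe.oddComponents.ncard ≤ 1 :=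
    haveI := hconn.subsingleton_connectedComponent
    Set.ncard_le_one_of_subsingleton _
  have hpar := K.coe.odd_ncard_oddComponents
  have hcard : K.verts.ncard + u.ncard = Nat.card α + Nat.card β := by
    rw [← Nat.card_sum, ← Set.ncard_univ, ← Set.ncard_sdiff_add_ncard_of_subset u.subset_univ]
    rfl
  rw [Nat.card_coe_set_eq, Nat.odd_iff, Nat.odd_iff] at hpar
  rw [Nat.even_iff] at heven
  change ¬ u.ncard < K.coe.oddComponents.ncard
  omega

lemma df_le_ncard_exposed {M : G.Subgraph} (hM : M.IsMatching) (S : Set α) :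
    df G S ≤ (exposed G M).ncard := by
  obtain ⟨M', hM'⟩ := hM.exists_isPerfectMatching_addUniversalVerts
  have := not_isTutteViolator_of_isPerfectMatching hM' (.inl '' S ∪ .range .inr)
  rwa [isTutteViolator_addUniversalVerts_iff, Nat.card_coe_set_eq, not_lt] at this

lemma exists_isMatching_ncard_exposed_eq_df {S : Set α} (hS : ∀ S', df G S' ≤ df G S) :
    ∃ M : G.Subgraph, M.IsMatching ∧ (exposed G M).ncard = df G S := by
  obtain ⟨d, hd⟩ : ∃ d : ℕ, df G S = d :=
    Int.eq_ofNat_of_zero_le <| (Int.natCast_nonneg _).trans <| by simpa [df] using hS ∅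
  have hTutte (u : Set (α ⊕ Fin d)) : ¬ (G.addUniversalVerts (Fin d)).IsTutteViolator u := by
    by_cases hu : Set.range Sum.inr ⊆ u
    · have hu' : u = .inl '' (.inl ⁻¹' u) ∪ .range .inr := by
        ext (a | j)
        · simp
        · simpa using hu ⟨j, rfl⟩
      rw [hu', isTutteViolator_addUniversalVerts_iff, Nat.card_fin, not_lt, ← hd]
      exact hS _
    · obtain ⟨_, ⟨j, rfl⟩, hj⟩ := Set.not_subset.mp hu
      refine not_isTutteViolator_addUniversalVerts ?_ hj
      have := even_df_add_card G S
      rw [hd] at this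
      rw [Nat.card_fin, add_comm]
      exact_mod_cast this
  obtain ⟨M', hM'⟩ := tutte.mpr hTutte
  obtain ⟨M, hM, hle⟩ := hM'.exists_isMatching_ncard_exposed_le
  refine ⟨M, hM, le_antisymm ?_ (df_le_ncard_exposed hM S)⟩
  rw [hd]
  exact_mod_cast (Nat.card_fin d) ▸ hle

end SimpleGraph

/-- The Tutte-Berge Formula: the minimum number of exposed vertices over all
matchings equals the maximum of `od(S) - |S|` over all vertex subsets `S`. -/
theorem stmt_15 (G : SimpleGraph V) :
    ∃ (M : Subgraph G) (S : Set V), M.IsMatching ∧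
      ((exposed G M).ncard : ℤ) = df G S ∧
      (∀ M' : Subgraph G, M'.IsMatching → df G S ≤ ((exposed G M').ncard : ℤ)) ∧
      (∀ S' : Set V, df G S' ≤ df G S) := by
  obtain ⟨S, hS⟩ := Finite.exists_max (df G)
  obtain ⟨M, hM, hMS⟩ := exists_isMatching_ncard_exposed_eq_df hS
  exact ⟨M, S, hM, hMS, fun M' hM' => df_le_ncard_exposed hM' S, hS⟩
end
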